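/- arXiv:2312.03170 — 2 statements merged into one kernel-verified Lean document; each statement's English description precedes it below -/
import Mathlib

section
/- Let A be a finite-dimensional algebra over a field F, S ⊆ A, and m ≥ 1. If A is left sliding, then Lin_{m+1}(S) = S·Lin_m(S) + Lin_m(S); if A is right sliding, then Lin_{m+1}(S) = Lin_m(S)·S + Lin_m(S). Here X·Y denotes the linear span of all products x y with x ∈ X, y ∈ Y. -/
open Pointwise

namespace DescLength

variable (F : Type*) [Field F] {A : Type*} [NonUnitalNonAssocRing A] [Module F A]

/-- `Word S n a` means that `a` is a word of length `n` in letters from `S`,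
i.e. a product of `n` elements of `S` with some arrangement of brackets. -/
inductive Word (S : Set A) : ℕ → A → Prop
  | of {a : A} : a ∈ S → Word S 1 a
  | mul {m n : ℕ} {a b : A} : Word S m a → Word S n b → Word S (m + n) (a * b)

/-- The set of words of length exactly `n` in letters from `S`. -/
def words (S : Set A) (n : ℕ) : Set A := {a | Word S n a}

/-- `Lin_k(S)`, where the submodule `o` plays the role of `Lin_0(S)`:
`o = ⊥` if `A` is non-unital and `o = span F {e}` if `A` is unital with unity `e`. -/
def lin (o : Submodule F A) (S : Set A) (k : ℕ) : Submodule F A :=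
  o ⊔ Submodule.span F (⋃ i ∈ Finset.Icc 1 k, words S i)

/-- `Lin_∞(S)`. -/
def linInfty (o : Submodule F A) (S : Set A) : Submodule F A := ⨆ k, lin F o S k

/-- `S` is a generating set for `A`. -/
def Generates (o : Submodule F A) (S : Set A) : Prop := linInfty F o S = ⊤

/-- The length of the set `S`: `l(S) = min {k | Lin_k(S) = Lin_∞(S)}`. -/
noncomputable def len (o : Submodule F A) (S : Set A) : ℕ := sInf {k | lin F o S k = linInfty F o S}

/-- The length of the algebra `A`: `l(A) = max {l(S) | S generates A}`. -/
noncomputable def algLen (o : Submodule F A) : ℕ := sSup {n | ∃ S : Set A, Generates F o S ∧ len F o S = n}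

/-- The sequence of differences `d_k(S)`. -/
noncomputable def dseq (o : Submodule F A) (S : Set A) : ℕ → ℕ
  | 0 => Module.finrank F o
  | k + 1 => Module.finrank F (lin F o S (k + 1)) - Module.finrank F (lin F o S k)

/-- `o` is the span of the words of length zero: `⊥` if `A` has no two-sided unity,
and the span of the unity `e` otherwise. -/
def IsUnitalSpan (o : Submodule F A) : Prop :=
  ((¬ ∃ e : A, ∀ x : A, e * x = x ∧ x * e = x) ∧ o = ⊥) ∨
  (∃ e : A, (∀ x : A, e * x = x ∧ x * e = x) ∧ o = Submodule.span F {e})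

def Ql (x y z : A) : Set A :=
  {x*(z*y), x*(y*z), y*(x*z), y*(z*x), x*y, y*x, x*z, z*x, y*z, z*y, x, y, z}

def Qr (x y z : A) : Set A :=
  {(x*z)*y, (z*x)*y, (y*z)*x, (z*y)*x, x*y, y*x, x*z, z*x, y*z, z*y, x, y, z}

def Pset (x y z : A) : Set A := Ql x y z ∪ Qr x y z

/-- `A` is mixing: `(xy)z, z(xy) ∈ Lin_1(P(x,y,z))` for all `x, y, z`. -/
def IsMixing (o : Submodule F A) : Prop :=
  ∀ x y z : A, (x*y)*z ∈ o ⊔ Submodule.span F (Pset x y z) ∧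
    z*(x*y) ∈ o ⊔ Submodule.span F (Pset x y z)

/-- `A` is left sliding: `(xy)z ∈ Lin_1(Q_l(x,y,z))` for all `x, y, z`. -/
def IsLeftSliding (o : Submodule F A) : Prop :=
  ∀ x y z : A, (x*y)*z ∈ o ⊔ Submodule.span F (Ql x y z)

/-- `A` is right sliding: `z(xy) ∈ Lin_1(Q_r(x,y,z))` for all `x, y, z`. -/
def IsRightSliding (o : Submodule F A) : Prop :=
  ∀ x y z : A, z*(x*y) ∈ o ⊔ Submodule.span F (Qr x y z)

/-- `Lin_1(a, b, aa, ab, ba)`. -/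
def lin1five (o : Submodule F A) (a b : A) : Submodule F A :=
  o ⊔ Submodule.span F {a, b, a*a, a*b, b*a}

/-- `Lin'_2(a, b, c)`. -/
def lin2' (o : Submodule F A) (a b c : A) : Submodule F A :=
  o ⊔ Submodule.span F {a, b, c, a*b, b*a, b*c, c*b, a*c, c*a}

/-- `A` is descendingly flexible. -/
def IsDescFlexible (o : Submodule F A) : Prop :=
  ∀ a b c : A, (a*b)*a ∈ lin1five F o a b ∧ a*(b*a) ∈ lin1five F o a b ∧
    (a*b)*c + (c*b)*a ∈ lin2' F o a b c ∧ a*(b*c) + c*(b*a) ∈ lin2' F o a b c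

/-- `A` is descendingly alternative. -/
def IsDescAlternative (o : Submodule F A) : Prop :=
  ∀ a b c : A, (b*a)*a ∈ lin1five F o a b ∧ a*(a*b) ∈ lin1five F o a b ∧
    (a*b)*c + (a*c)*b ∈ lin2' F o a b c ∧ a*(b*c) + b*(a*c) ∈ lin2' F o a b c

/-- `S^{(m)}`: the words obtained from a letter of `S` by repeatedly multiplying by a single
letter of `S`, on the left or on the right. -/
def chainWords (S : Set A) : ℕ → Set A
  | 0 => ∅
  | 1 => S
  | n + 2 => chainWords S (n + 1) * S ∪ S * chainWords S (n + 1)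


section Aux

variable {F' : Type*} [Field F'] {A' : Type*} [NonUnitalNonAssocRing A'] [Module F' A']

lemma Word.one_le' {S : Set A'} {n : ℕ} {a : A'} (h : Word S n a) : 1 ≤ n := by
  induction h with
  | of _ => exact le_refl _
  | mul _ _ ih1 ih2 => omega

lemma word_mem_lin (o : Submodule F' A') {S : Set A'} {i k : ℕ} {a : A'}
    (h : Word S i a) (hk : i ≤ k) : a ∈ lin F' o S k := by
  apply Submodule.mem_sup_right
  apply Submodule.subset_span
  simp only [Set.mem_iUnion]
  exact ⟨i, Finset.mem_Icc.mpr ⟨h.one_le', hk⟩, h⟩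

lemma lin_mono (o : Submodule F' A') (S : Set A') {k l : ℕ} (hkl : k ≤ l) :
    lin F' o S k ≤ lin F' o S l := by
  refine sup_le_sup_left (Submodule.span_mono ?_) o
  refine Set.iUnion_mono fun i => Set.iUnion_mono' fun hi => ?_
  rw [Finset.mem_Icc] at hi ⊢
  exact ⟨⟨hi.1, hi.2.trans hkl⟩, le_refl _⟩

lemma o_le_lin (o : Submodule F' A') (S : Set A') (k : ℕ) : o ≤ lin F' o S k := le_sup_left

set_option linter.unusedSectionVars false

variable [SMulCommClass F' A' A'] [IsScalarTower F' A' A']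

lemma slide_left (o : Submodule F' A') (hL : IsLeftSliding F' o) {S : Set A'} {m : ℕ} :
    ∀ i j (a b : A'), Word S i a → Word S j b → i + j ≤ m + 1 →
    a * b ∈ Submodule.span F' (S * (lin F' o S m : Set A')) ⊔ lin F' o S m := by
  intro i
  induction i using Nat.strong_induction_on with
  | _ i IH =>
  intro j a b ha hb hij
  have hj1 := hb.one_le'
  rcases le_or_gt (i + j) m with h | h
  · exact Submodule.mem_sup_right (word_mem_lin o (ha.mul hb) h)
  have hij' : i + j = m + 1 := by omega
  cases ha with
  | of hS =>
    exact Submodule.mem_sup_left (Submodule.subset_span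
      (Set.mul_mem_mul hS (word_mem_lin o hb (by omega))))
  | @mul p q x y hx hy =>
    have hp1 := hx.one_le'
    have hq1 := hy.one_le'
    refine SetLike.le_def.mp ?_ (hL x y b)
    refine sup_le ((o_le_lin o S m).trans le_sup_right) ?_
    rw [Submodule.span_le]
    intro t ht
    simp only [Ql, Set.mem_insert_iff, Set.mem_singleton_iff] at ht
    rcases ht with rfl|rfl|rfl|rfl|rfl|rfl|rfl|rfl|rfl|rfl|rfl|rfl|rfl
    · exact IH p (by omega) (j + q) x (b * y) hx (hb.mul hy) (by omega)
    · exact IH p (by omega) (q + j) x (y * b) hx (hy.mul hb) (by omega)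
    · exact IH q (by omega) (p + j) y (x * b) hy (hx.mul hb) (by omega)
    · exact IH q (by omega) (j + p) y (b * x) hy (hb.mul hx) (by omega)
    · exact Submodule.mem_sup_right (word_mem_lin o (hx.mul hy) (by omega))
    · exact Submodule.mem_sup_right (word_mem_lin o (hy.mul hx) (by omega))
    · exact Submodule.mem_sup_right (word_mem_lin o (hx.mul hb) (by omega))
    · exact Submodule.mem_sup_right (word_mem_lin o (hb.mul hx) (by omega))
    · exact Submodule.mem_sup_right (word_mem_lin o (hy.mul hb) (by omega))
    · exact Submodule.mem_sup_right (word_mem_lin o (hb.mul hy) (by omega))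
    · exact Submodule.mem_sup_right (word_mem_lin o hx (by omega))
    · exact Submodule.mem_sup_right (word_mem_lin o hy (by omega))
    · exact Submodule.mem_sup_right (word_mem_lin o hb (by omega))

lemma slide_right (o : Submodule F' A') (hR : IsRightSliding F' o) {S : Set A'} {m : ℕ} :
    ∀ j i (a b : A'), Word S i a → Word S j b → i + j ≤ m + 1 →
    a * b ∈ Submodule.span F' ((lin F' o S m : Set A') * S) ⊔ lin F' o S m := by
  intro j
  induction j using Nat.strong_induction_on with
  | _ j IH =>
  intro i a b ha hb hij
  have hi1 := ha.one_le'
  rcases le_or_gt (i + j) m with h | h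
  · exact Submodule.mem_sup_right (word_mem_lin o (ha.mul hb) h)
  have hij' : i + j = m + 1 := by omega
  cases hb with
  | of hS =>
    exact Submodule.mem_sup_left (Submodule.subset_span
      (Set.mul_mem_mul (word_mem_lin o ha (by omega)) hS))
  | @mul p q x y hx hy =>
    have hp1 := hx.one_le'
    have hq1 := hy.one_le'
    refine SetLike.le_def.mp ?_ (hR x y a)
    refine sup_le ((o_le_lin o S m).trans le_sup_right) ?_
    rw [Submodule.span_le]
    intro t ht
    simp only [Qr, Set.mem_insert_iff, Set.mem_singleton_iff] at ht
    rcases ht with rfl|rfl|rfl|rfl|rfl|rfl|rfl|rfl|rfl|rfl|rfl|rfl|rfl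
    · exact IH q (by omega) (p + i) (x * a) y (hx.mul ha) hy (by omega)
    · exact IH q (by omega) (i + p) (a * x) y (ha.mul hx) hy (by omega)
    · exact IH p (by omega) (q + i) (y * a) x (hy.mul ha) hx (by omega)
    · exact IH p (by omega) (i + q) (a * y) x (ha.mul hy) hx (by omega)
    · exact Submodule.mem_sup_right (word_mem_lin o (hx.mul hy) (by omega))
    · exact Submodule.mem_sup_right (word_mem_lin o (hy.mul hx) (by omega))
    · exact Submodule.mem_sup_right (word_mem_lin o (hx.mul ha) (by omega))
    · exact Submodule.mem_sup_right (word_mem_lin o (ha.mul hx) (by omega))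
    · exact Submodule.mem_sup_right (word_mem_lin o (hy.mul ha) (by omega))
    · exact Submodule.mem_sup_right (word_mem_lin o (ha.mul hy) (by omega))
    · exact Submodule.mem_sup_right (word_mem_lin o hx (by omega))
    · exact Submodule.mem_sup_right (word_mem_lin o hy (by omega))
    · exact Submodule.mem_sup_right (word_mem_lin o ha (by omega))

lemma mulLeft_lin_le (o : Submodule F' A') (ho : IsUnitalSpan F' o) {S : Set A'}
    {m : ℕ} {s : A'} (hs : s ∈ S) {v : A'} (hv : v ∈ lin F' o S m) :
    s * v ∈ lin F' o S (m + 1) := by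
  have : lin F' o S m ≤ (lin F' o S (m + 1)).comap (LinearMap.mulLeft F' s) := by
    refine sup_le ?_ ?_
    · rcases ho with ⟨-, rfl⟩ | ⟨e, he, rfl⟩
      · exact bot_le
      · rw [Submodule.span_le, Set.singleton_subset_iff]
        simp only [SetLike.mem_coe, Submodule.mem_comap, LinearMap.mulLeft_apply, (he s).2]
        exact word_mem_lin _ (Word.of hs) (by omega)
    · rw [Submodule.span_le]
      intro t ht
      simp only [Set.mem_iUnion] at ht
      obtain ⟨i, hi, hti⟩ := ht
      rw [Finset.mem_Icc] at hi
      simp only [SetLike.mem_coe, Submodule.mem_comap, LinearMap.mulLeft_apply]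
      exact word_mem_lin _ ((Word.of hs).mul hti) (by omega)
  exact this hv

lemma mulRight_lin_le (o : Submodule F' A') (ho : IsUnitalSpan F' o) {S : Set A'}
    {m : ℕ} {s : A'} (hs : s ∈ S) {v : A'} (hv : v ∈ lin F' o S m) :
    v * s ∈ lin F' o S (m + 1) := by
  have : lin F' o S m ≤ (lin F' o S (m + 1)).comap (LinearMap.mulRight F' s) := by
    refine sup_le ?_ ?_
    · rcases ho with ⟨-, rfl⟩ | ⟨e, he, rfl⟩
      · exact bot_le
      · rw [Submodule.span_le, Set.singleton_subset_iff]
        simp only [SetLike.mem_coe, Submodule.mem_comap, LinearMap.mulRight_apply, (he s).1]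
        exact word_mem_lin _ (Word.of hs) (by omega)
    · rw [Submodule.span_le]
      intro t ht
      simp only [Set.mem_iUnion] at ht
      obtain ⟨i, hi, hti⟩ := ht
      rw [Finset.mem_Icc] at hi
      simp only [SetLike.mem_coe, Submodule.mem_comap, LinearMap.mulRight_apply]
      exact word_mem_lin _ (hti.mul (Word.of hs)) (by omega)
  exact this hv

end Aux

/-- If `A` is left sliding, then `Lin_{m+1}(S) = S·Lin_m(S) + Lin_m(S)`;
if `A` is right sliding, then `Lin_{m+1}(S) = Lin_m(S)·S + Lin_m(S)` (for `m ≥ 1`). -/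
theorem lin_succ_of_sliding {F A : Type*} [Field F] [NonUnitalNonAssocRing A]
    [Module F A] [SMulCommClass F A A] [IsScalarTower F A A] [FiniteDimensional F A]
    (o : Submodule F A) (ho : IsUnitalSpan F o) (S : Set A) (m : ℕ) (hm : 1 ≤ m) :
    (IsLeftSliding F o →
      lin F o S (m + 1) = Submodule.span F (S * (lin F o S m : Set A)) ⊔ lin F o S m) ∧
    (IsRightSliding F o →
      lin F o S (m + 1) = Submodule.span F ((lin F o S m : Set A) * S) ⊔ lin F o S m) := by
  constructor
  · intro hL
    refine le_antisymm ?_ ?_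
    · refine sup_le ((o_le_lin o S m).trans le_sup_right) ?_
      rw [Submodule.span_le]
      intro t ht
      simp only [Set.mem_iUnion] at ht
      obtain ⟨i, hi, hti⟩ := ht
      rw [Finset.mem_Icc] at hi
      rcases le_or_gt i m with h | h
      · exact Submodule.mem_sup_right (word_mem_lin o hti h)
      · cases hti with
        | of hS => omega
        | @mul p q x y hx hy => exact slide_left o hL p q x y hx hy (by omega)
    · refine sup_le ?_ (lin_mono o S (by omega))
      rw [Submodule.span_le]
      intro t ht
      rw [Set.mem_mul] at ht
      obtain ⟨s, hs, v, hv, rfl⟩ := ht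
      exact mulLeft_lin_le o ho hs hv
  · intro hR
    refine le_antisymm ?_ ?_
    · refine sup_le ((o_le_lin o S m).trans le_sup_right) ?_
      rw [Submodule.span_le]
      intro t ht
      simp only [Set.mem_iUnion] at ht
      obtain ⟨i, hi, hti⟩ := ht
      rw [Finset.mem_Icc] at hi
      rcases le_or_gt i m with h | h
      · exact Submodule.mem_sup_right (word_mem_lin o hti h)
      · cases hti with
        | of hS => omega
        | @mul p q x y hx hy => exact slide_right o hR q p x y hx hy (by omega)
    · refine sup_le ?_ (lin_mono o S (by omega))
      rw [Submodule.span_le]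
      intro t ht
      rw [Set.mem_mul] at ht
      obtain ⟨v, hv, s, hs, rfl⟩ := ht
      exact mulRight_lin_le o ho hs hv

end DescLength
end

section
/- Let A be a finite-dimensional descendingly alternative algebra over a field F and let S ⊆ A. Then Lin_{2d₁(S)+1}(S) = Lin_{2d₁(S)}(S), and consequently l(S) ≤ 2d₁(S), where d₁(S) = dim Lin_1(S) − dim Lin_0(S). -/
open Pointwise

namespace DescLength

variable (F : Type*) [Field F] {A : Type*} [NonUnitalNonAssocRing A] [Module F A]

/-!
Write `M k = Lin_k(S)`. The four defining conditions say that, modulo lower terms of this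
filtration, left multiplications `L` anticommute and square to zero, right multiplications `R` do
too, and `R_z L_x ≡ -L_{xz}`, `L_x R_z ≡ -R_{xz}`. The last two let one multiply by a word one
letter at a time, so modulo `M k` the space `M (k + 1)` is spanned by chain words, built from a
letter by one-sided multiplications by letters.

In a chain word two left multiplications by the same letter `u` cancel: left multiplications
between them are passed by anticommuting, right ones are absorbed as `R_t L_c ≡ -L_{ct}`, and at
the end `L_u L_c ≡ -L_c L_u ≡ ±R_{tⱼ} ⋯ R_{t₁} L_u L_u ≡ 0`. The product is multilinear in the
letters, so it is lower as soon as more than `d₁ = dim M 1 - dim M 0` left letters occur, and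
symmetrically for right letters. A chain word of length `2 d₁ + 1` has `d₁ + 1` letters on one
side once its innermost letter is counted on the side that is short.
-/

section Rank

variable {F} {V : Type*} [AddCommGroup V] [Module F V]

theorem exists_eq_append_cons_mem_sup_span_or_le_finrank (N : Submodule F V)
    [FiniteDimensional F V] (ops : List (Bool × V)) :
    (∃ ops₁ v ops₂, ops = ops₁ ++ (true, v) :: ops₂ ∧
        v ∈ N ⊔ Submodule.span F {a | (true, a) ∈ ops₂}) ∨
      Module.finrank F N + ops.countP (·.1) ≤
        Module.finrank F ↥(N ⊔ Submodule.span F {a | (true, a) ∈ ops}) := by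
  induction ops with
  | nil =>
    right
    rw [show {a : V | (true, a) ∈ ([] : List (Bool × V))} = ∅ by simp, Submodule.span_empty,
      sup_bot_eq]
    simp
  | cons x ops ih =>
    rcases ih with ⟨ops₁, v, ops₂, rfl, hv⟩ | hrank
    · exact Or.inl ⟨x :: ops₁, v, ops₂, rfl, hv⟩
    obtain ⟨_ | _, a⟩ := x
    · right
      rw [show {b | (true, b) ∈ (false, a) :: ops} = {b | (true, b) ∈ ops} by simp]
      simpa using hrank
    by_cases ha : a ∈ N ⊔ Submodule.span F {a | (true, a) ∈ ops}
    · exact Or.inl ⟨[], a, ops, rfl, ha⟩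
    right
    have hlt : N ⊔ Submodule.span F {a | (true, a) ∈ ops} <
        N ⊔ Submodule.span F {b | (true, b) ∈ (true, a) :: ops} := by
      refine SetLike.lt_iff_le_and_exists.2 ⟨sup_le_sup_left (Submodule.span_mono ?_) _, a, ?_, ha⟩
      · exact fun b hb => List.mem_cons_of_mem _ hb
      · exact Submodule.mem_sup_right (Submodule.subset_span (by simp))
    have := Submodule.finrank_lt_finrank_of_lt hlt
    simp only [List.countP_cons, ite_true] at this ⊢
    omega

theorem exists_eq_append_cons_mem_sup_span {N P : Submodule F V} [FiniteDimensional F V]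
    (hNP : N ≤ P) {ops : List (Bool × V)} (hops : ∀ x ∈ ops, x.2 ∈ P)
    (hcount : Module.finrank F P - Module.finrank F N < ops.countP (·.1)) :
    ∃ ops₁ v ops₂, ops = ops₁ ++ (true, v) :: ops₂ ∧
      v ∈ N ⊔ Submodule.span F {a | (true, a) ∈ ops₂} := by
  refine (exists_eq_append_cons_mem_sup_span_or_le_finrank N ops).resolve_right fun hrank => ?_
  have hle : N ⊔ Submodule.span F {a | (true, a) ∈ ops} ≤ P :=
    sup_le hNP (Submodule.span_le.2 fun a ha => hops _ ha)
  have := Submodule.finrank_mono hle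
  have := Submodule.finrank_mono hNP
  omega

end Rank

section Filtration

variable {F} {M : ℕ → Submodule F A}

def degLE (M : ℕ → Submodule F A) (n : ℕ) : Submodule F (Module.End F A) where
  carrier := {T | ∀ p, ∀ x ∈ M p, T x ∈ M (p + n)}
  add_mem' hT hU p x hx := add_mem (hT p x hx) (hU p x hx)
  zero_mem' _ _ _ := zero_mem _
  smul_mem' c _ hT p x hx := Submodule.smul_mem _ c (hT p x hx)

/-- Only the positive levels are constrained: the identities fail on the unity, which lies in
`M 0`. -/
def degLT (M : ℕ → Submodule F A) (n : ℕ) : Submodule F (Module.End F A) where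
  carrier := {T | ∀ p, ∀ x ∈ M (p + 1), T x ∈ M (p + n)}
  add_mem' hT hU p x hx := add_mem (hT p x hx) (hU p x hx)
  zero_mem' _ _ _ := zero_mem _
  smul_mem' c _ hT p x hx := Submodule.smul_mem _ c (hT p x hx)

variable {T U : Module.End F A} {m n k : ℕ}

theorem mul_mem_degLE (hT : T ∈ degLE M m) (hU : U ∈ degLE M n) (hk : m + n = k) :
    T * U ∈ degLE M k := fun p x hx => by
  simpa [← hk, add_left_comm, add_comm] using hT _ _ (hU p x hx)

theorem mul_mem_degLT_of_left (hT : T ∈ degLT M m) (hU : U ∈ degLE M n) (hk : m + n = k) :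
    T * U ∈ degLT M k := fun p x hx => by
  have := hT (p + n) (U x) (by simpa [add_right_comm] using hU _ x hx)
  simpa [← hk, add_left_comm, add_comm] using this

theorem mul_mem_degLT_of_right (hT : T ∈ degLE M m) (hU : U ∈ degLT M n) (hk : m + n = k) :
    T * U ∈ degLT M k := fun p x hx => by
  simpa [← hk, add_left_comm, add_comm] using hT _ _ (hU p x hx)

theorem one_mem_degLE : (1 : Module.End F A) ∈ degLE M 0 := fun _ _ hx => hx

structure IsDescAltFiltration (μ : A →ₗ[F] A →ₗ[F] A) (M : ℕ → Submodule F A) : Prop where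
  mul_mem {p q : ℕ} {x y : A} : x ∈ M p → y ∈ M q → μ x y ∈ M (p + q)
  right_sq_mem {p q : ℕ} {x a : A} : x ∈ M (p + 1) → a ∈ M (q + 1) →
    μ (μ x a) a ∈ M (p + 2 * q + 2)
  left_sq_mem {p q : ℕ} {x a : A} : x ∈ M (p + 1) → a ∈ M (q + 1) →
    μ a (μ a x) ∈ M (p + 2 * q + 2)
  right_anticomm_mem {p q r : ℕ} {x y z : A} : x ∈ M (p + 1) → y ∈ M (q + 1) → z ∈ M (r + 1) →
    μ (μ x y) z + μ (μ x z) y ∈ M (p + q + r + 2)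
  left_anticomm_mem {p q r : ℕ} {x y z : A} : x ∈ M (p + 1) → y ∈ M (q + 1) → z ∈ M (r + 1) →
    μ x (μ y z) + μ y (μ x z) ∈ M (p + q + r + 2)

namespace IsDescAltFiltration

variable {μ : A →ₗ[F] A →ₗ[F] A}

theorem flip (h : IsDescAltFiltration μ M) : IsDescAltFiltration μ.flip M where
  mul_mem hx hy := by simpa [add_comm] using h.mul_mem hy hx
  right_sq_mem hx ha := by simpa using h.left_sq_mem hx ha
  left_sq_mem hx ha := by simpa using h.right_sq_mem hx ha
  right_anticomm_mem hx hy hz := by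
    simpa [add_comm, add_left_comm] using h.left_anticomm_mem hz hy hx
  left_anticomm_mem hx hy hz := by
    simpa [add_comm, add_left_comm] using h.right_anticomm_mem hz hy hx

variable (h : IsDescAltFiltration μ M)
include h

theorem leftMul_mem_degLE {a : A} {q : ℕ} (ha : a ∈ M q) : μ a ∈ degLE M q :=
  fun p _ hx => by simpa [add_comm] using h.mul_mem ha hx

theorem rightMul_mem_degLE {a : A} {q : ℕ} (ha : a ∈ M q) : μ.flip a ∈ degLE M q :=
  h.flip.leftMul_mem_degLE ha

theorem leftMul_mem_degLT_one {z : A} (hz : z ∈ M 0) : μ z ∈ degLT M 1 :=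
  fun p _ hx => by simpa using h.mul_mem hz hx

theorem leftMul_mul_self_mem_degLT {a : A} {q : ℕ} (ha : a ∈ M (q + 1)) :
    μ a * μ a ∈ degLT M (2 * q + 2) :=
  fun _ _ hx => by simpa [add_assoc] using h.left_sq_mem hx ha

theorem leftMul_anticomm_mem_degLT {x y : A} {p q : ℕ} (hx : x ∈ M (p + 1)) (hy : y ∈ M (q + 1)) :
    μ x * μ y + μ y * μ x ∈ degLT M (p + q + 2) :=
  fun r _ hz => by
    rw [show r + (p + q + 2) = p + q + r + 2 by omega]
    simpa using h.left_anticomm_mem hx hy hz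

theorem rightMul_mul_leftMul_add_mem_degLT {x z : A} {p r : ℕ} (hx : x ∈ M (p + 1))
    (hz : z ∈ M (r + 1)) : μ.flip z * μ x + μ (μ x z) ∈ degLT M (p + r + 2) :=
  fun q _ hy => by
    rw [show q + (p + r + 2) = p + q + r + 2 by omega]
    simpa using h.right_anticomm_mem hx hy hz

end IsDescAltFiltration

end Filtration

section MulOps

variable {F} (μ : A →ₗ[F] A →ₗ[F] A)

/-- `(true, a)` stands for the left multiplication `μ a`, `(false, a)` for the right
multiplication `μ.flip a`; a list of them is composed with its head outermost. -/
def mulOp (x : Bool × A) : Module.End F A := cond x.1 (μ x.2) (μ.flip x.2)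

def mulOps (ops : List (Bool × A)) : Module.End F A := (ops.map (mulOp μ)).prod

@[simp] theorem mulOp_true (a : A) : mulOp μ (true, a) = μ a := rfl

@[simp] theorem mulOp_false (a : A) : mulOp μ (false, a) = μ.flip a := rfl

@[simp] theorem mulOps_nil : mulOps μ [] = 1 := rfl

@[simp] theorem mulOps_cons (x : Bool × A) (ops : List (Bool × A)) :
    mulOps μ (x :: ops) = mulOp μ x * mulOps μ ops := List.prod_cons

@[simp] theorem mulOps_append (ops₁ ops₂ : List (Bool × A)) :
    mulOps μ (ops₁ ++ ops₂) = mulOps μ ops₁ * mulOps μ ops₂ := by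
  simp [mulOps]

theorem mulOps_flip_map (ops : List (Bool × A)) :
    mulOps μ.flip (ops.map fun x => (!x.1, x.2)) = mulOps μ ops := by
  induction ops with
  | nil => rfl
  | cons x ops ih =>
    obtain ⟨_ | _, a⟩ := x <;> simp [ih]

theorem mulOps_append_singleton_apply (ops : List (Bool × A)) (b : Bool) (a x : A) :
    mulOps μ (ops ++ [(b, a)]) x = mulOps μ (ops ++ [(!b, x)]) a := by
  cases b <;> simp

variable {μ} {M : ℕ → Submodule F A} (h : IsDescAltFiltration μ M)
include h

theorem IsDescAltFiltration.mulOp_mem_degLE {x : Bool × A} {q : ℕ} (hx : x.2 ∈ M q) :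
    mulOp μ x ∈ degLE M q := by
  obtain ⟨_ | _, a⟩ := x
  · exact h.rightMul_mem_degLE hx
  · exact h.leftMul_mem_degLE hx

theorem IsDescAltFiltration.mulOps_mem_degLE {ops : List (Bool × A)}
    (hops : ∀ x ∈ ops, x.2 ∈ M 1) : mulOps μ ops ∈ degLE M ops.length := by
  induction ops with
  | nil => exact one_mem_degLE
  | cons x ops ih =>
    simp only [List.forall_mem_cons] at hops
    exact mul_mem_degLE (h.mulOp_mem_degLE hops.1) (ih hops.2) (by simp [add_comm])

theorem IsDescAltFiltration.leftMul_mul_leftMul_mem_degLT_of_mul {u c t : A} {j : ℕ}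
    (hu : u ∈ M 1) (hc : c ∈ M (j + 1)) (ht : t ∈ M 1) (hcu : μ c * μ u ∈ degLT M (j + 2)) :
    μ (μ c t) * μ u ∈ degLT M (j + 3) := by
  have hrel := h.rightMul_mul_leftMul_add_mem_degLT hc ht
  rw [show μ (μ c t) * μ u = (μ.flip t * μ c + μ (μ c t)) * μ u - μ.flip t * (μ c * μ u) by
    noncomm_ring]
  exact sub_mem (mul_mem_degLT_of_left hrel (h.leftMul_mem_degLE hu) rfl)
    (mul_mem_degLT_of_right (h.rightMul_mem_degLE ht) hcu (by omega))

/-- `c` stands for a right-normed product `(⋯(u t₁)⋯) tⱼ`: the induction only needs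
`μ c * μ u ≡ 0`, which survives `c ↦ μ c t` because `μ.flip t * μ c ≡ -μ (μ c t)`. -/
theorem IsDescAltFiltration.leftMul_mul_mulOps_mul_leftMul_mem_degLT {u : A} (hu : u ∈ M 1)
    (Q : List (Bool × A)) (hQ : ∀ x ∈ Q, x.2 ∈ M 1) {c : A} {j : ℕ} (hc : c ∈ M (j + 1))
    (hcu : μ c * μ u ∈ degLT M (j + 2)) :
    μ u * mulOps μ Q * μ c ∈ degLT M (Q.length + j + 2) := by
  induction Q using List.reverseRecOn generalizing j c with
  | nil =>
    rw [mulOps_nil, mul_one, List.length_nil, zero_add,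
      show μ u * μ c = (μ u * μ c + μ c * μ u) - μ c * μ u by abel]
    exact sub_mem (by simpa using h.leftMul_anticomm_mem_degLT (p := 0) hu hc) hcu
  | append_singleton Q x ih =>
    rw [List.length_append, List.length_singleton]
    simp only [List.mem_append, List.mem_singleton] at hQ
    have huQ := mul_mem_degLE (h.leftMul_mem_degLE hu)
      (h.mulOps_mem_degLE fun y hy => hQ y (Or.inl hy)) rfl
    obtain ⟨_ | _, a⟩ := x
    · have ha : a ∈ M 1 := hQ _ (Or.inr rfl)
      have hrel := h.rightMul_mul_leftMul_add_mem_degLT hc ha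
      have hac := h.leftMul_mul_leftMul_mem_degLT_of_mul hu hc ha hcu
      rw [mulOps_append, mulOps_cons, mulOps_nil, mul_one, mulOp_false,
        show μ u * (mulOps μ Q * μ.flip a) * μ c =
          μ u * mulOps μ Q * (μ.flip a * μ c + μ (μ c a)) - μ u * mulOps μ Q * μ (μ c a) by
        noncomm_ring]
      have hrec := ih (fun y hy => hQ y (Or.inl hy)) (h.mul_mem hc ha) hac
      rw [show Q.length + (j + 1) + 2 = Q.length + 1 + j + 2 by omega] at hrec
      exact sub_mem (mul_mem_degLT_of_right huQ hrel (by omega)) hrec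
    · have ha : a ∈ M 1 := hQ _ (Or.inr rfl)
      have hrel := h.leftMul_anticomm_mem_degLT (p := 0) ha hc
      rw [mulOps_append, mulOps_cons, mulOps_nil, mul_one, mulOp_true,
        show μ u * (mulOps μ Q * μ a) * μ c =
          μ u * mulOps μ Q * (μ a * μ c + μ c * μ a) - μ u * mulOps μ Q * μ c * μ a by
        noncomm_ring]
      exact sub_mem (mul_mem_degLT_of_right huQ hrel (by omega))
        (mul_mem_degLT_of_left (ih (fun y hy => hQ y (Or.inl hy)) hc hcu)
          (h.leftMul_mem_degLE ha) (by omega))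

end MulOps

section Collapse

variable {F} {μ : A →ₗ[F] A →ₗ[F] A} {M : ℕ → Submodule F A} (h : IsDescAltFiltration μ M)
include h

theorem IsDescAltFiltration.mulOps_mem_degLT_of_mem_sup_span {ops₁ ops₂ : List (Bool × A)}
    {v : A} (hops₁ : ∀ x ∈ ops₁, x.2 ∈ M 1) (hops₂ : ∀ x ∈ ops₂, x.2 ∈ M 1)
    (hv : v ∈ M 0 ⊔ Submodule.span F {a | (true, a) ∈ ops₂}) :
    mulOps μ (ops₁ ++ (true, v) :: ops₂) ∈ degLT M (ops₁.length + ops₂.length + 1) := by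
  have hP₁ := h.mulOps_mem_degLE hops₁
  let f : A →ₗ[F] Module.End F A :=
    LinearMap.mulLeft F (mulOps μ ops₁) ∘ₗ LinearMap.mulRight F (mulOps μ ops₂) ∘ₗ μ
  suffices M 0 ⊔ Submodule.span F {a | (true, a) ∈ ops₂} ≤
      (degLT M (ops₁.length + ops₂.length + 1)).comap f by
    simpa [f, mul_assoc] using this hv
  refine sup_le (fun z hz => ?_) (Submodule.span_le.2 fun a ha => ?_)
  · exact mul_mem_degLT_of_right hP₁ (mul_mem_degLT_of_left (h.leftMul_mem_degLT_one hz)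
      (h.mulOps_mem_degLE hops₂) rfl) (by omega)
  · obtain ⟨B, C, rfl⟩ := List.append_of_mem ha
    simp only [List.mem_append, List.mem_cons] at hops₂
    have ha₁ : a ∈ M 1 := hops₂ _ (Or.inr (Or.inl rfl))
    have hB := h.leftMul_mul_mulOps_mul_leftMul_mem_degLT ha₁ B
      (fun x hx => hops₂ x (Or.inl hx)) (j := 0) ha₁ (h.leftMul_mul_self_mem_degLT ha₁)
    have hC := h.mulOps_mem_degLE fun x hx => hops₂ x (Or.inr (Or.inr hx))
    show mulOps μ ops₁ * (μ a * mulOps μ (B ++ (true, a) :: C)) ∈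
      degLT M (ops₁.length + (B ++ (true, a) :: C).length + 1)
    rw [show mulOps μ ops₁ * (μ a * mulOps μ (B ++ (true, a) :: C)) =
      mulOps μ ops₁ * (μ a * mulOps μ B * μ a) * mulOps μ C by simp [mul_assoc]]
    exact mul_mem_degLT_of_left (mul_mem_degLT_of_right hP₁ hB rfl) hC
      (by simp only [List.length_append, List.length_cons]; omega)

theorem IsDescAltFiltration.mulOps_mem_degLT_of_lt_countP [FiniteDimensional F A]
    (h01 : M 0 ≤ M 1) {ops : List (Bool × A)} (hops : ∀ x ∈ ops, x.2 ∈ M 1)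
    (hcount : Module.finrank F (M 1) - Module.finrank F (M 0) < ops.countP (·.1)) :
    mulOps μ ops ∈ degLT M ops.length := by
  obtain ⟨ops₁, v, ops₂, rfl, hv⟩ := exists_eq_append_cons_mem_sup_span h01 hops hcount
  simp only [List.mem_append, List.mem_cons] at hops
  have := h.mulOps_mem_degLT_of_mem_sup_span (fun x hx => hops x (Or.inl hx))
    (fun x hx => hops x (Or.inr (Or.inr hx))) hv
  rwa [show ops₁.length + ops₂.length + 1 = (ops₁ ++ (true, v) :: ops₂).length by
    simp only [List.length_append, List.length_cons]; omega]
    at this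

theorem IsDescAltFiltration.mulOps_apply_mem_of_lt_countP [FiniteDimensional F A]
    (h01 : M 0 ≤ M 1) {ops : List (Bool × A)} (hops : ∀ y ∈ ops, y.2 ∈ M 1)
    (hcount : Module.finrank F (M 1) - Module.finrank F (M 0) < ops.countP (·.1) ∨
      Module.finrank F (M 1) - Module.finrank F (M 0) < ops.countP (!·.1))
    {x : A} (hx : x ∈ M 1) : mulOps μ ops x ∈ M ops.length := by
  rcases hcount with hcount | hcount
  · simpa using h.mulOps_mem_degLT_of_lt_countP h01 hops hcount 0 x (by simpa using hx)
  · have := h.flip.mulOps_mem_degLT_of_lt_countP h01 (ops := ops.map fun y => (!y.1, y.2))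
      (fun y hy => by obtain ⟨z, hz, rfl⟩ := List.mem_map.1 hy; exact hops z hz)
      (by simpa [List.countP_map, Function.comp_def] using hcount) 0 x
      (by simpa using hx)
    simpa [mulOps_flip_map] using this

theorem IsDescAltFiltration.mulOps_apply_mem [FiniteDimensional F A] (h01 : M 0 ≤ M 1)
    {ops : List (Bool × A)} (hops : ∀ y ∈ ops, y.2 ∈ M 1) {x : A} (hx : x ∈ M 1)
    (hlen : 2 * (Module.finrank F (M 1) - Module.finrank F (M 0)) ≤ ops.length) :
    mulOps μ ops x ∈ M ops.length := by
  set d := Module.finrank F (M 1) - Module.finrank F (M 0)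
  by_cases hcount : d < ops.countP (·.1) ∨ d < ops.countP (!·.1)
  · exact h.mulOps_apply_mem_of_lt_countP h01 hops hcount hx
  have hsum : ops.length = ops.countP (·.1) + ops.countP (!·.1) := by
    simpa using ops.length_eq_countP_add_countP (·.1)
  rcases ops.eq_nil_or_concat' with rfl | ⟨init, ⟨b, a⟩, rfl⟩
  · have : M 0 = M 1 := Submodule.eq_of_le_of_finrank_le h01 (by
      simp only [List.length_nil, nonpos_iff_eq_zero, mul_eq_zero] at hlen; omega)
    simpa [this] using hx
  simp only [List.mem_append, List.mem_singleton] at hops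
  rw [mulOps_append_singleton_apply,
    show (init ++ [(b, a)]).length = (init ++ [(!b, x)]).length by simp]
  refine h.mulOps_apply_mem_of_lt_countP h01 ?_ ?_ (hops _ (Or.inr rfl))
  · simp only [List.mem_append, List.mem_singleton]
    rintro y (hy | rfl)
    exacts [hops y (Or.inl hy), hx]
  · simp only [not_or, not_lt] at hcount
    cases b <;> simp only [List.countP_append, List.countP_singleton, List.length_append,
      List.length_singleton, Bool.not_true, Bool.not_false, if_true, if_false, Bool.false_eq_true]
      at hcount hsum hlen ⊢ <;> omega

end Collapse

section Lin

variable {F} {o : Submodule F A} {S : Set A}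

theorem Word.one_le {n : ℕ} {w : A} (hw : Word S n w) : 1 ≤ n := by
  induction hw <;> omega

theorem lin_mono_s13 : Monotone (lin F o S) := fun _ _ hkl =>
  sup_le_sup_left (Submodule.span_mono (Set.biUnion_subset_biUnion_left fun i hi => by
    simp only [Finset.coe_Icc, Set.mem_Icc] at hi ⊢
    omega)) _

theorem lin_le_iff {k : ℕ} {N : Submodule F A} :
    lin F o S k ≤ N ↔ o ≤ N ∧ ∀ n ≤ k, ∀ w, Word S n w → w ∈ N := by
  simp only [lin, sup_le_iff, Submodule.span_le, Set.iUnion₂_subset_iff, Finset.mem_Icc]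
  refine and_congr_right fun _ => ⟨fun hN n hn w hw => hN n ⟨hw.one_le, hn⟩ hw,
    fun hN n hn w hw => hN n hn.2 w hw⟩

theorem Word.mem_lin {n k : ℕ} {w : A} (hw : Word S n w) (hnk : n ≤ k) : w ∈ lin F o S k :=
  lin_le_iff.1 le_rfl |>.2 n hnk w hw

variable [SMulCommClass F A A] [IsScalarTower F A A]

theorem IsUnitalSpan.exists_smul_eq (ho : IsUnitalSpan F o) {z : A} (hz : z ∈ o) :
    ∃ c : F, ∀ x : A, z * x = c • x ∧ x * z = c • x := by
  rcases ho with ⟨-, rfl⟩ | ⟨e, he, rfl⟩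
  · exact ⟨0, fun x => by simp [(Submodule.mem_bot F).1 hz]⟩
  · obtain ⟨c, rfl⟩ := Submodule.mem_span_singleton.1 hz
    exact ⟨c, fun x => ⟨by rw [smul_mul_assoc, (he x).1], by rw [mul_smul_comm, (he x).2]⟩⟩

theorem mul_mem_lin (ho : IsUnitalSpan F o) {p q : ℕ} {x y : A} (hx : x ∈ lin F o S p)
    (hy : y ∈ lin F o S q) : x * y ∈ lin F o S (p + q) := by
  suffices lin F o S p ≤ (lin F o S (p + q)).comap (LinearMap.mulRight F y) from this hx
  refine lin_le_iff.2 ⟨fun z hz => ?_, fun m hm a ha => ?_⟩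
  · obtain ⟨c, hc⟩ := ho.exists_smul_eq hz
    simpa [(hc y).1] using Submodule.smul_mem _ c (lin_mono_s13 (Nat.le_add_left q p) hy)
  suffices lin F o S q ≤ (lin F o S (p + q)).comap (LinearMap.mulLeft F a) from this hy
  refine lin_le_iff.2 ⟨fun z hz => ?_, fun n hn b hb => ?_⟩
  · obtain ⟨c, hc⟩ := ho.exists_smul_eq hz
    simpa [(hc a).2] using Submodule.smul_mem _ c (ha.mem_lin (by omega))
  · exact (Word.mul ha hb).mem_lin (by omega)

theorem lin1five_le (ho : IsUnitalSpan F o) {p q : ℕ} {x a : A} (hx : x ∈ lin F o S (p + 1))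
    (ha : a ∈ lin F o S (q + 1)) : lin1five F o a x ≤ lin F o S (p + 2 * q + 2) := by
  have hmono := lin_mono_s13 (o := o) (S := S)
  refine sup_le (lin_le_iff.1 le_rfl).1 (Submodule.span_le.2 ?_)
  simp only [Set.insert_subset_iff, Set.singleton_subset_iff, SetLike.mem_coe]
  exact ⟨hmono (by omega) ha, hmono (by omega) hx, hmono (by omega) (mul_mem_lin ho ha ha),
    hmono (by omega) (mul_mem_lin ho ha hx), hmono (by omega) (mul_mem_lin ho hx ha)⟩

theorem lin2'_le (ho : IsUnitalSpan F o) {p q r : ℕ} {x y z : A} (hx : x ∈ lin F o S (p + 1))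
    (hy : y ∈ lin F o S (q + 1)) (hz : z ∈ lin F o S (r + 1)) :
    lin2' F o x y z ≤ lin F o S (p + q + r + 2) := by
  have hmono := lin_mono_s13 (o := o) (S := S)
  refine sup_le (lin_le_iff.1 le_rfl).1 (Submodule.span_le.2 ?_)
  simp only [Set.insert_subset_iff, Set.singleton_subset_iff, SetLike.mem_coe]
  exact ⟨hmono (by omega) hx, hmono (by omega) hy, hmono (by omega) hz,
    hmono (by omega) (mul_mem_lin ho hx hy), hmono (by omega) (mul_mem_lin ho hy hx),
    hmono (by omega) (mul_mem_lin ho hy hz), hmono (by omega) (mul_mem_lin ho hz hy),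
    hmono (by omega) (mul_mem_lin ho hx hz), hmono (by omega) (mul_mem_lin ho hz hx)⟩

theorem isDescAltFiltration_lin (ho : IsUnitalSpan F o) (halt : IsDescAlternative F o) :
    IsDescAltFiltration (LinearMap.mul F A) (lin F o S) where
  mul_mem hx hy := mul_mem_lin ho hx hy
  right_sq_mem hx ha := lin1five_le ho hx ha (halt _ _ 0).1
  left_sq_mem hx ha := lin1five_le ho hx ha (halt _ _ 0).2.1
  right_anticomm_mem hx hy hz := lin2'_le ho hx hy hz (halt _ _ _).2.2.1
  left_anticomm_mem hx hy hz := lin2'_le ho hx hy hz (halt _ _ _).2.2.2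

end Lin

section ChainWords

variable {F} {o : Submodule F A} {S : Set A}

def chainSpan (o : Submodule F A) (S : Set A) (k : ℕ) : Submodule F A :=
  lin F o S k ⊔ Submodule.span F (chainWords S (k + 1))

theorem chainWords_subset_words : ∀ n, chainWords S n ⊆ words S n
  | 0 => Set.empty_subset _
  | 1 => fun _ hs => Word.of hs
  | n + 2 => by
    rintro _ (⟨c, hc, s, hs, rfl⟩ | ⟨s, hs, c, hc, rfl⟩)
    · exact Word.mul (m := n + 1) (chainWords_subset_words (n + 1) hc) (Word.of hs)
    · have := Word.mul (Word.of hs) (chainWords_subset_words (n + 1) hc : Word S (n + 1) c)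
      rwa [add_comm] at this

theorem chainSpan_le_lin (k : ℕ) : chainSpan o S k ≤ lin F o S (k + 1) :=
  sup_le (lin_mono_s13 k.le_succ) (Submodule.span_le.2 fun _ hy =>
    Word.mem_lin (chainWords_subset_words _ hy) le_rfl)

variable [SMulCommClass F A A] [IsScalarTower F A A]

theorem exists_mulOps_eq_of_mem_chainWords {y : A} (k : ℕ) (hy : y ∈ chainWords S (k + 1)) :
    ∃ ops x, ops.length = k ∧ (∀ z ∈ ops, z.2 ∈ S) ∧ x ∈ S ∧
      mulOps (LinearMap.mul F A) ops x = y := by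
  induction k generalizing y with
  | zero => exact ⟨[], y, rfl, by simp, hy, rfl⟩
  | succ k ih =>
    rcases hy with ⟨c, hc, s, hs, rfl⟩ | ⟨s, hs, c, hc, rfl⟩
    all_goals obtain ⟨ops, x, rfl, hops, hx, rfl⟩ := ih hc
    · exact ⟨(false, s) :: ops, x, rfl, by simpa [hs] using hops, hx, by simp⟩
    · exact ⟨(true, s) :: ops, x, rfl, by simpa [hs] using hops, hx, by simp⟩

variable (h : IsDescAltFiltration (LinearMap.mul F A) (lin F o S))
include h

theorem letter_mul_mem_chainSpan {s : A} (hs : s ∈ S) (j : ℕ) :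
    ∀ y ∈ chainSpan o S j, s * y ∈ chainSpan o S (j + 1) ∧ y * s ∈ chainSpan o S (j + 1) := by
  have hs₁ : s ∈ lin F o S 1 := (Word.of hs).mem_lin le_rfl
  have hL : chainSpan o S j ≤ (chainSpan o S (j + 1)).comap (LinearMap.mulLeft F s) :=
    sup_le (fun y hy => Submodule.mem_sup_left (by simpa [add_comm] using h.mul_mem hs₁ hy))
      (Submodule.span_le.2 fun y hy =>
        Submodule.mem_sup_right (Submodule.subset_span (Or.inr (Set.mul_mem_mul hs hy))))
  have hR : chainSpan o S j ≤ (chainSpan o S (j + 1)).comap (LinearMap.mulRight F s) :=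
    sup_le (fun y hy => Submodule.mem_sup_left (by simpa using h.mul_mem hy hs₁))
      (Submodule.span_le.2 fun y hy =>
        Submodule.mem_sup_right (Submodule.subset_span (Or.inl (Set.mul_mem_mul hy hs))))
  exact fun y hy => ⟨hL hy, hR hy⟩

theorem Word.mul_mem_chainSpan {m : ℕ} {c : A} (hc : Word S m c) :
    ∀ j, ∀ y ∈ chainSpan o S j, c * y ∈ chainSpan o S (j + m) ∧ y * c ∈ chainSpan o S (j + m) := by
  induction hc with
  | of hs => exact letter_mul_mem_chainSpan h hs
  | @mul m₁ m₂ c₁ c₂ hc₁ hc₂ ih₁ ih₂ =>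
    obtain ⟨p, rfl⟩ : ∃ p, m₁ = p + 1 := ⟨m₁ - 1, by have := hc₁.one_le; omega⟩
    obtain ⟨q, rfl⟩ : ∃ q, m₂ = q + 1 := ⟨m₂ - 1, by have := hc₂.one_le; omega⟩
    intro j y hy
    have hc₁' : c₁ ∈ lin F o S (p + 1) := hc₁.mem_lin le_rfl
    have hc₂' : c₂ ∈ lin F o S (q + 1) := hc₂.mem_lin le_rfl
    have hy' : y ∈ lin F o S (j + 1) := chainSpan_le_lin j hy
    have hlow : lin F o S (p + q + j + 2) ≤ chainSpan o S (j + (p + 1 + (q + 1))) :=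
      le_sup_left.trans' (lin_mono_s13 (by omega))
    constructor
    · have hrel : c₁ * c₂ * y + c₁ * y * c₂ ∈ lin F o S (p + q + j + 2) := by
        simpa using h.right_anticomm_mem hc₁' hc₂' hy'
      have hrec := (ih₂ _ _ (ih₁ j y hy).1).2
      rw [show c₁ * c₂ * y = (c₁ * c₂ * y + c₁ * y * c₂) - c₁ * y * c₂ by abel]
      exact sub_mem (hlow hrel) (by rwa [← add_assoc])
    · have hrel : y * (c₁ * c₂) + c₁ * (y * c₂) ∈ lin F o S (p + q + j + 2) := by
        simpa [add_comm, add_left_comm] using h.left_anticomm_mem hy' hc₁' hc₂'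
      have hrec := (ih₁ _ _ (ih₂ j y hy).2).1
      rw [show y * (c₁ * c₂) = (y * (c₁ * c₂) + c₁ * (y * c₂)) - c₁ * (y * c₂) by abel]
      exact sub_mem (hlow hrel) (by rwa [add_assoc, add_comm (q + 1)] at hrec)

theorem Word.mem_chainSpan {n : ℕ} {w : A} (hw : Word S n w) : w ∈ chainSpan o S (n - 1) := by
  induction hw with
  | of hs => exact Submodule.mem_sup_right (Submodule.subset_span hs)
  | @mul m n a b ha hb _ ihb =>
    have := (ha.mul_mem_chainSpan h _ _ ihb).1
    rwa [show n - 1 + m = m + n - 1 by have := hb.one_le; omega] at this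

theorem lin_succ_le_chainSpan (k : ℕ) : lin F o S (k + 1) ≤ chainSpan o S k := by
  refine lin_le_iff.2 ⟨(lin_le_iff.1 le_rfl).1.trans le_sup_left, fun n hn w hw => ?_⟩
  rcases Nat.lt_or_eq_of_le hn with hn | rfl
  · exact Submodule.mem_sup_left (hw.mem_lin (by omega))
  · exact hw.mem_chainSpan h

theorem chainWords_subset_lin [FiniteDimensional F A] {k : ℕ} (hk : 2 * dseq F o S 1 ≤ k) :
    chainWords S (k + 1) ⊆ lin F o S k := by
  intro y hy
  obtain ⟨ops, x, rfl, hops, hx, rfl⟩ := exists_mulOps_eq_of_mem_chainWords (F := F) k hy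
  exact h.mulOps_apply_mem (lin_mono_s13 zero_le_one)
    (fun z hz => (Word.of (hops z hz)).mem_lin le_rfl) ((Word.of hx).mem_lin le_rfl) hk

theorem lin_succ_eq_of_two_mul_dseq_le [FiniteDimensional F A] {k : ℕ}
    (hk : 2 * dseq F o S 1 ≤ k) : lin F o S (k + 1) = lin F o S k :=
  le_antisymm ((lin_succ_le_chainSpan h k).trans
      (sup_le le_rfl (Submodule.span_le.2 (chainWords_subset_lin h hk))))
    (lin_mono_s13 k.le_succ)

theorem linInfty_eq_lin_two_mul_dseq [FiniteDimensional F A] :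
    linInfty F o S = lin F o S (2 * dseq F o S 1) := by
  refine le_antisymm (iSup_le fun k => ?_) (le_iSup (lin F o S) _)
  rcases le_total k (2 * dseq F o S 1) with hk | hk
  · exact lin_mono_s13 hk
  · induction k, hk using Nat.le_induction with
    | base => exact le_rfl
    | succ k hk ih => exact (lin_succ_eq_of_two_mul_dseq_le h hk).le.trans ih

end ChainWords

/-- If `A` is descendingly alternative, then
`Lin_{2d₁(S)+1}(S) = Lin_{2d₁(S)}(S)` and consequently `l(S) ≤ 2d₁(S)`,
where `d₁(S) = dim Lin_1(S) - dim Lin_0(S)`. -/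
theorem len_le_two_d1_of_descAlternative {F A : Type*} [Field F] [NonUnitalNonAssocRing A]
    [Module F A] [SMulCommClass F A A] [IsScalarTower F A A] [FiniteDimensional F A]
    (o : Submodule F A) (ho : IsUnitalSpan F o) (halt : IsDescAlternative F o) (S : Set A) :
    lin F o S (2 * dseq F o S 1 + 1) = lin F o S (2 * dseq F o S 1) ∧
    len F o S ≤ 2 * dseq F o S 1 := by
  have h := isDescAltFiltration_lin (S := S) ho halt
  exact ⟨lin_succ_eq_of_two_mul_dseq_le h le_rfl, Nat.sInf_le (linInfty_eq_lin_two_mul_dseq h).symm⟩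

end DescLength
end
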